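/- arXiv:math-ph/0011046 — 2 statements merged into one kernel-verified Lean document; each statement's English description precedes it below -/
import Mathlib

section
/- Let d ≥ 1 and κ > 0, and let f : ℤ^d → ℝ be ℤ^d-symmetric with |f(x)| ≤ (|x|+1)^{−(d+2+κ)} for all x ∈ ℤ^d. Define f̂(k) = ∑_{x∈ℤ^d} f(x) e^{ik·x} for k ∈ ℝ^d, and e(k) := f̂(k) − ∑_x f(x) + (|k|²/(2d)) ∑_x |x|² f(x). Then there is a constant c depending only on d and κ such that for all k with 0 < |k| ≤ 1/2: if κ ≠ 2 then |e(k)| ≤ c|k|^{2+min(κ,2)}, and if κ = 2 then |e(k)| ≤ c|k|⁴ log(1/|k|). -/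
open scoped BigOperators

/-- The Euclidean norm of a point of `ℤ^d`. -/
noncomputable def znorm {d : ℕ} (x : Fin d → ℤ) : ℝ :=
  Real.sqrt (∑ i, ((x i : ℝ)) ^ 2)

/-- The Euclidean norm of a point of `ℝ^d`. -/
noncomputable def rnorm {d : ℕ} (k : Fin d → ℝ) : ℝ :=
  Real.sqrt (∑ i, (k i) ^ 2)

/-- A function on `ℤ^d` is `ℤ^d`-symmetric if it is invariant under permutations of the
coordinates and sign changes of individual coordinates of its argument. -/
def ZdSymm {d : ℕ} (f : (Fin d → ℤ) → ℝ) : Prop :=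
  ∀ (σ : Equiv.Perm (Fin d)) (e : Fin d → Bool) (x : Fin d → ℤ),
    f (fun i => if e i then -(x (σ i)) else x (σ i)) = f x

/-- The Fourier transform of a `ℤ^d`-symmetric summable function, which is real:
`f̂(k) = ∑_x f(x) cos(k·x)`. -/
noncomputable def fhat {d : ℕ} (f : (Fin d → ℤ) → ℝ) (k : Fin d → ℝ) : ℝ :=
  ∑' x : Fin d → ℤ, f x * Real.cos (∑ i, k i * (x i : ℝ))


set_option maxHeartbeats 1000000

/-- MVT telescope for negative powers. -/
lemma rpow_neg_telescope {p : ℝ} (hp : 0 < p) {m : ℕ} (hm : 2 ≤ m) :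
    p * (m : ℝ) ^ (-(1 + p)) ≤ ((m : ℝ) - 1) ^ (-p) - (m : ℝ) ^ (-p) := by
  have h2m : (2 : ℝ) ≤ (m : ℝ) := by exact_mod_cast hm
  have hm1 : (1 : ℝ) ≤ (m : ℝ) - 1 := by linarith
  have hab : (m : ℝ) - 1 < (m : ℝ) := by linarith
  have hcont : ContinuousOn (fun t : ℝ => -(t ^ (-p))) (Set.Icc ((m : ℝ) - 1) (m : ℝ)) := by
    intro t ht
    have ht0 : t ≠ 0 := by have := ht.1; nlinarith
    exact ((Real.continuousAt_rpow_const t (-p) (Or.inl ht0)).continuousWithinAt).neg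
  have hderiv : ∀ t ∈ Set.Ioo ((m : ℝ) - 1) (m : ℝ),
      HasDerivAt (fun t : ℝ => -(t ^ (-p))) (p * t ^ (-(1 + p))) t := by
    intro t ht
    have ht0 : t ≠ 0 := by have := ht.1; nlinarith
    have h := (Real.hasDerivAt_rpow_const (x := t) (p := -p) (Or.inl ht0)).neg
    refine h.congr_deriv ?_
    rw [show -p - 1 = -(1 + p) by ring]; ring
  obtain ⟨c, hc, hceq⟩ := exists_hasDerivAt_eq_slope (fun t : ℝ => -(t ^ (-p)))
    (fun t => p * t ^ (-(1 + p))) hab hcont hderiv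
  have hc0 : (0 : ℝ) < c := by have := hc.1; linarith
  have hcm : c ≤ (m : ℝ) := le_of_lt hc.2
  have hmono : (m : ℝ) ^ (-(1 + p)) ≤ c ^ (-(1 + p)) :=
    Real.rpow_le_rpow_of_nonpos hc0 hcm (by linarith)
  have heq : p * c ^ (-(1 + p)) = ((m : ℝ) - 1) ^ (-p) - (m : ℝ) ^ (-p) := by
    rw [hceq]; field_simp; ring
  nlinarith [mul_le_mul_of_nonneg_left hmono (le_of_lt hp)]

/-- MVT telescope for powers `p ∈ (0,2]`. -/
lemma rpow_pos_telescope {p : ℝ} (hp : 0 < p) (hp2 : p ≤ 2) {m : ℕ} (hm : 2 ≤ m) :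
    (p / 2) * (m : ℝ) ^ (p - 1) ≤ (m : ℝ) ^ p - ((m : ℝ) - 1) ^ p := by
  have h2m : (2 : ℝ) ≤ (m : ℝ) := by exact_mod_cast hm
  have hm1 : (1 : ℝ) ≤ (m : ℝ) - 1 := by linarith
  have hab : (m : ℝ) - 1 < (m : ℝ) := by linarith
  have hcont : ContinuousOn (fun t : ℝ => t ^ p) (Set.Icc ((m : ℝ) - 1) (m : ℝ)) := by
    intro t ht
    have ht0 : t ≠ 0 := by have := ht.1; nlinarith
    exact (Real.continuousAt_rpow_const t p (Or.inl ht0)).continuousWithinAt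
  have hderiv : ∀ t ∈ Set.Ioo ((m : ℝ) - 1) (m : ℝ),
      HasDerivAt (fun t : ℝ => t ^ p) (p * t ^ (p - 1)) t := by
    intro t ht
    have ht0 : t ≠ 0 := by have := ht.1; nlinarith
    exact Real.hasDerivAt_rpow_const (Or.inl ht0)
  obtain ⟨c, hc, hceq⟩ := exists_hasDerivAt_eq_slope (fun t : ℝ => t ^ p)
    (fun t => p * t ^ (p - 1)) hab hcont hderiv
  have hc1 : (1 : ℝ) ≤ c := le_of_lt (lt_of_le_of_lt hm1 hc.1)
  have hc0 : (0 : ℝ) < c := by linarith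
  have hchalf : (m : ℝ) / 2 ≤ c := by have := hc.1; linarith
  have hmp : (0:ℝ) ≤ (m : ℝ) ^ (p - 1) := Real.rpow_nonneg (by linarith) _
  have key : (m : ℝ) ^ (p - 1) / 2 ≤ c ^ (p - 1) := by
    rcases le_or_gt p 1 with h1 | h1
    · have := Real.rpow_le_rpow_of_nonpos hc0 (le_of_lt hc.2) (by linarith : p - 1 ≤ 0)
      linarith
    · have h1' : (0:ℝ) ≤ p - 1 := by linarith
      have hmono : ((m : ℝ) / 2) ^ (p - 1) ≤ c ^ (p - 1) :=
        Real.rpow_le_rpow (by linarith) hchalf h1'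
      have hsplit : ((m : ℝ) / 2) ^ (p - 1) = (m : ℝ) ^ (p - 1) / (2:ℝ) ^ (p - 1) :=
        Real.div_rpow (by linarith) (by norm_num) _
      have h2bound : (2:ℝ) ^ (p - 1) ≤ 2 := by
        have := Real.rpow_le_rpow_of_exponent_le (by norm_num : (1:ℝ) ≤ 2)
          (by linarith : p - 1 ≤ 1)
        rwa [Real.rpow_one] at this
      have h2pos : (0:ℝ) < (2:ℝ) ^ (p - 1) := Real.rpow_pos_of_pos (by norm_num) _
      have : (m : ℝ) ^ (p - 1) / 2 ≤ (m : ℝ) ^ (p - 1) / (2:ℝ) ^ (p - 1) :=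
        div_le_div_of_nonneg_left hmp h2pos h2bound
      calc (m : ℝ) ^ (p - 1) / 2 ≤ ((m : ℝ) / 2) ^ (p - 1) := by rw [hsplit]; exact this
        _ ≤ c ^ (p - 1) := hmono
  have heq : p * c ^ (p - 1) = (m : ℝ) ^ p - ((m : ℝ) - 1) ^ p := by
    rw [hceq]; field_simp; ring
  nlinarith [mul_le_mul_of_nonneg_left key (le_of_lt hp)]

/-- Tail sum estimate: `∑_{m=M+1}^{N} m^{-(1+p)} ≤ M^{-p}/p`. -/
lemma sum_tail_le {p : ℝ} (hp : 0 < p) (M : ℕ) (hM : 1 ≤ M) (N : ℕ) :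
    ∑ m ∈ Finset.Icc (M + 1) N, (m : ℝ) ^ (-(1 + p)) ≤ (M : ℝ) ^ (-p) / p := by
  have hMp : (0:ℝ) ≤ (M : ℝ) ^ (-p) := Real.rpow_nonneg (by positivity) _
  rcases le_or_gt (M + 1) N with hN | hN
  · have key : ∀ n, M ≤ n → ∑ m ∈ Finset.Icc (M + 1) n, (m : ℝ) ^ (-(1 + p))
        ≤ ((M : ℝ) ^ (-p) - (n : ℝ) ^ (-p)) / p := by
      intro n hn
      induction n, hn using Nat.le_induction with
      | base => simp [Finset.Icc_eq_empty_of_lt (Nat.lt_succ_self M)]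
      | succ n hn ih =>
        rw [Finset.sum_Icc_succ_top (by omega)]
        have htel := rpow_neg_telescope hp (show 2 ≤ n + 1 by omega)
        have hcast : ((n + 1 : ℕ) : ℝ) = (n : ℝ) + 1 := by push_cast; ring
        have hstep : ((n + 1 : ℕ) : ℝ) ^ (-(1 + p))
            ≤ ((n : ℝ) ^ (-p) - ((n + 1 : ℕ) : ℝ) ^ (-p)) / p := by
          rw [le_div_iff₀ hp, hcast]
          push_cast at htel
          rw [show ((n : ℝ) + 1) - 1 = (n : ℝ) by ring] at htel
          nlinarith
        calc ∑ m ∈ Finset.Icc (M + 1) n, (m : ℝ) ^ (-(1 + p)) + ((n + 1 : ℕ) : ℝ) ^ (-(1 + p))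
            ≤ ((M : ℝ) ^ (-p) - (n : ℝ) ^ (-p)) / p
              + ((n : ℝ) ^ (-p) - ((n + 1 : ℕ) : ℝ) ^ (-p)) / p := add_le_add ih hstep
          _ = ((M : ℝ) ^ (-p) - ((n + 1 : ℕ) : ℝ) ^ (-p)) / p := by ring
    have h := key N (by omega)
    have hN0 : (0:ℝ) ≤ (N : ℝ) ^ (-p) := Real.rpow_nonneg (by positivity) _
    calc ∑ m ∈ Finset.Icc (M + 1) N, (m : ℝ) ^ (-(1 + p))
        ≤ ((M : ℝ) ^ (-p) - (N : ℝ) ^ (-p)) / p := h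
      _ ≤ (M : ℝ) ^ (-p) / p := by
          apply (div_le_div_iff_of_pos_right hp).mpr; linarith
  · rw [Finset.Icc_eq_empty_of_lt hN]
    simp
    positivity

/-- `∑_{m=1}^N m^{-(1+p)} ≤ 1 + 1/p`. -/
lemma sum_neg_pow_le {p : ℝ} (hp : 0 < p) (N : ℕ) :
    ∑ m ∈ Finset.Icc 1 N, (m : ℝ) ^ (-(1 + p)) ≤ 1 + 1 / p := by
  rcases Nat.eq_zero_or_pos N with h0 | hN
  · subst h0; simp; positivity
  · have hsplit : Finset.Icc 1 N = insert 1 (Finset.Icc 2 N) := by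
      ext m; simp [Finset.mem_Icc, Finset.mem_insert]; omega
    rw [hsplit, Finset.sum_insert (by simp [Finset.mem_Icc])]
    have htail := sum_tail_le hp 1 le_rfl N
    norm_num [Real.one_rpow] at htail ⊢
    linarith

/-- `∑_{m=1}^N m^{p-1} ≤ (1+2/p) N^p` for `p ∈ (0,2]`. -/
lemma sum_pos_pow_le {p : ℝ} (hp : 0 < p) (hp2 : p ≤ 2) {N : ℕ} (hN : 1 ≤ N) :
    ∑ m ∈ Finset.Icc (1:ℕ) N, (m : ℝ) ^ (p - 1) ≤ (1 + 2 / p) * (N : ℝ) ^ p := by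
  have key : ∀ n, 1 ≤ n → ∑ m ∈ Finset.Icc (1:ℕ) n, (m : ℝ) ^ (p - 1)
      ≤ 1 + (2 / p) * ((n : ℝ) ^ p - 1) := by
    intro n hn
    induction n, hn using Nat.le_induction with
    | base => simp
    | succ n hn ih =>
      rw [Finset.sum_Icc_succ_top (by omega)]
      have htel := rpow_pos_telescope hp hp2 (show 2 ≤ n + 1 by omega)
      push_cast at htel ⊢
      rw [show ((n : ℝ) + 1) - 1 = (n : ℝ) by ring] at htel
      have hstep : ((n : ℝ) + 1) ^ (p - 1) ≤ (2 / p) * (((n:ℝ)+1) ^ p - (n:ℝ) ^ p) := by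
        have h2p : (0:ℝ) < 2 / p := by positivity
        calc ((n : ℝ) + 1) ^ (p - 1) = (2/p) * ((p/2) * ((n : ℝ) + 1) ^ (p - 1)) := by
              field_simp
          _ ≤ (2/p) * (((n:ℝ)+1) ^ p - (n:ℝ) ^ p) :=
              mul_le_mul_of_nonneg_left htel (le_of_lt h2p)
      linarith
  have h := key N hN
  have hNp : (1:ℝ) ≤ (N : ℝ) ^ p :=
    Real.one_le_rpow (by exact_mod_cast hN) (le_of_lt hp)
  have h2p : (0:ℝ) ≤ 2 / p := by positivity
  nlinarith [h, hNp, h2p]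

/-- `∑_{m=1}^N m^{-1} ≤ 1 + log N`. -/
lemma sum_harmonic_le {N : ℕ} (hN : 1 ≤ N) :
    ∑ m ∈ Finset.Icc (1:ℕ) N, (m : ℝ) ^ (-(1:ℝ)) ≤ 1 + Real.log N := by
  have key : ∀ n, 1 ≤ n → ∑ m ∈ Finset.Icc (1:ℕ) n, (m : ℝ) ^ (-(1:ℝ)) ≤ 1 + Real.log n := by
    intro n hn
    induction n, hn using Nat.le_induction with
    | base => simp
    | succ n hn ih =>
      rw [Finset.sum_Icc_succ_top (by omega)]
      have hn0 : (0:ℝ) < (n : ℝ) := by exact_mod_cast hn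
      have hn1 : (0:ℝ) < (n : ℝ) + 1 := by linarith
      have hstep : ((n + 1 : ℕ) : ℝ) ^ (-(1:ℝ)) ≤ Real.log ((n:ℝ)+1) - Real.log n := by
        have hx : (0:ℝ) < (n:ℝ) / ((n:ℝ)+1) := by positivity
        have := Real.log_le_sub_one_of_pos hx
        rw [Real.log_div (ne_of_gt hn0) (ne_of_gt hn1)] at this
        have hcast : ((n + 1 : ℕ) : ℝ) = (n:ℝ) + 1 := by push_cast; ring
        rw [hcast, Real.rpow_neg_one]
        have h2 : (n:ℝ) / ((n:ℝ)+1) - 1 = -(1 / ((n:ℝ)+1)) := by field_simp; ring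
        rw [h2] at this
        have : Real.log ((n:ℝ)+1) - Real.log n ≥ 1 / ((n:ℝ)+1) := by linarith
        rw [ge_iff_le, one_div] at this
        exact this
      have hcast : ((n + 1 : ℕ) : ℝ) = (n:ℝ) + 1 := by push_cast; ring
      rw [hcast] at hstep ⊢
      linarith
  have h := key N hN
  exact h

/-- Splitting a min-sum at `M`. -/
lemma sum_min_split (a b : ℕ → ℝ) (ha : ∀ m, 0 ≤ a m) (hb : ∀ m, 0 ≤ b m) (M N : ℕ) :
    ∑ m ∈ Finset.Icc 1 N, min (a m) (b m)
      ≤ ∑ m ∈ Finset.Icc 1 M, b m + ∑ m ∈ Finset.Icc (M + 1) N, a m := by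
  have hdisj : Disjoint (Finset.Icc 1 M) (Finset.Icc (M+1) N) := by
    apply Finset.disjoint_left.mpr
    intro m hm hm'
    simp [Finset.mem_Icc] at hm hm'; omega
  have hsub : Finset.Icc 1 N ⊆ Finset.Icc 1 M ∪ Finset.Icc (M+1) N := by
    intro m hm
    simp [Finset.mem_Icc, Finset.mem_union] at hm ⊢; omega
  calc ∑ m ∈ Finset.Icc 1 N, min (a m) (b m)
      ≤ ∑ m ∈ Finset.Icc 1 M ∪ Finset.Icc (M+1) N, min (a m) (b m) := by
        apply Finset.sum_le_sum_of_subset_of_nonneg hsub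
        intro m _ _; exact le_min (ha m) (hb m)
    _ = ∑ m ∈ Finset.Icc 1 M, min (a m) (b m) + ∑ m ∈ Finset.Icc (M+1) N, min (a m) (b m) :=
        Finset.sum_union hdisj
    _ ≤ ∑ m ∈ Finset.Icc 1 M, b m + ∑ m ∈ Finset.Icc (M + 1) N, a m := by
        apply add_le_add <;> apply Finset.sum_le_sum <;> intro m _
        · exact min_le_right _ _
        · exact min_le_left _ _

section main1d
variable {κ ε : ℝ}

lemma Mfacts (hε0 : 0 < ε) (hε : ε ≤ 1/2) :
    2 ≤ ⌊1/ε⌋₊ ∧ ((⌊1/ε⌋₊ : ℝ) ≤ 1/ε) ∧ (1/(2*ε) ≤ (⌊1/ε⌋₊ : ℝ)) := by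
  have h2 : (2:ℝ) ≤ 1/ε := by rw [le_div_iff₀ hε0]; linarith
  refine ⟨Nat.le_floor (by exact_mod_cast h2), Nat.floor_le (by positivity), ?_⟩
  have hfl := Nat.lt_floor_add_one (1/ε)
  have ha : 1/ε - 1/(2*ε) = 1/(2*ε) := by field_simp; ring
  have hb : (1:ℝ) ≤ 1/(2*ε) := by rw [le_div_iff₀ (by positivity)]; linarith
  linarith

/-- Tail bound: `ε^2 ∑_{m>M} m^{-(1+κ)} ≤ (2^κ/κ) ε^(2+κ)`. -/
lemma tail_bound (hκ : 0 < κ) (hε0 : 0 < ε) (hε : ε ≤ 1/2) (N : ℕ) :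
    ∑ m ∈ Finset.Icc (⌊1/ε⌋₊ + 1) N, ε^2 * (m : ℝ) ^ (-(1 + κ))
      ≤ ((2:ℝ)^κ / κ) * ε ^ (2 + κ) := by
  obtain ⟨hM2, hMle, hMge⟩ := Mfacts hε0 hε
  set M := ⌊1/ε⌋₊ with hM
  have htail := sum_tail_le hκ M (by omega) N
  have hMpos : (0:ℝ) < 1/(2*ε) := by positivity
  have hMneg : (M : ℝ) ^ (-κ) ≤ (1/(2*ε)) ^ (-κ) :=
    Real.rpow_le_rpow_of_nonpos hMpos hMge (by linarith)
  have hinv : (1/(2*ε)) ^ (-κ) = (2*ε) ^ κ := by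
    rw [one_div, Real.inv_rpow (by positivity), Real.rpow_neg (by positivity), inv_inv]
  have hmul : (2*ε) ^ κ = 2 ^ κ * ε ^ κ := Real.mul_rpow (by norm_num) (le_of_lt hε0)
  have hpow : ε^2 * ε ^ κ = ε ^ (2 + κ) := by
    rw [← Real.rpow_natCast ε 2, ← Real.rpow_add hε0]
    norm_num
  calc ∑ m ∈ Finset.Icc (M + 1) N, ε^2 * (m : ℝ) ^ (-(1 + κ))
      = ε^2 * ∑ m ∈ Finset.Icc (M + 1) N, (m : ℝ) ^ (-(1 + κ)) := by
        rw [Finset.mul_sum]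
    _ ≤ ε^2 * ((M : ℝ) ^ (-κ) / κ) := by
        apply mul_le_mul_of_nonneg_left htail (by positivity)
    _ ≤ ε^2 * ((2 ^ κ * ε ^ κ) / κ) := by
        apply mul_le_mul_of_nonneg_left _ (by positivity)
        apply (div_le_div_iff_of_pos_right hκ).mpr
        rw [← hmul]; rw [← hinv]; exact hMneg
    _ = ((2:ℝ)^κ / κ) * ε ^ (2 + κ) := by rw [← hpow]; ring

lemma head_factor (κ : ℝ) (ε : ℝ) (M : ℕ) :
    ∑ m ∈ Finset.Icc (1:ℕ) M, ε^4 * (m:ℝ)^(1-κ)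
      = ε^4 * ∑ m ∈ Finset.Icc (1:ℕ) M, (m:ℝ)^(1-κ) := by
  rw [Finset.mul_sum]

/-- Main 1-d estimate, case `κ ≠ 2`. -/
lemma main1d_ne (hκ : 0 < κ) (hne : κ ≠ 2) :
    ∃ C : ℝ, 0 < C ∧ ∀ ε : ℝ, 0 < ε → ε ≤ 1/2 → ∀ N : ℕ,
      ∑ m ∈ Finset.Icc (1:ℕ) N, min (ε^2 * (m:ℝ)^(-(1+κ))) (ε^4 * (m:ℝ)^(1-κ))
        ≤ C * ε ^ (2 + min κ 2) := by
  have h2κ : (0:ℝ) < 2^κ/κ := div_pos (Real.rpow_pos_of_pos two_pos κ) hκ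
  rcases lt_or_gt_of_ne hne with hlt | hgt
  · -- κ < 2
    have hp : (0:ℝ) < 2 - κ := by linarith
    have hC1 : (0:ℝ) < 2/(2-κ) := div_pos two_pos hp
    refine ⟨(1 + 2/(2-κ)) + 2^κ/κ, by linarith, ?_⟩
    intro ε hε0 hε N
    obtain ⟨hM2, hMle, hMge⟩ := Mfacts hε0 hε
    set M := ⌊1/ε⌋₊ with hM
    have hmin : min κ 2 = κ := min_eq_left (le_of_lt hlt)
    have hsplit := sum_min_split (fun m => ε^2*(m:ℝ)^(-(1+κ))) (fun m => ε^4*(m:ℝ)^(1-κ))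
      (fun m => by positivity) (fun m => by positivity) M N
    have htail := tail_bound hκ hε0 hε N
    -- head estimate
    have hhead : ∑ m ∈ Finset.Icc (1:ℕ) M, ε^4 * (m:ℝ)^(1-κ)
        ≤ (1 + 2/(2-κ)) * ε ^ (2+κ) := by
      rw [head_factor]
      have hsum : ∑ m ∈ Finset.Icc (1:ℕ) M, (m:ℝ)^(1-κ) ≤ (1 + 2/(2-κ)) * (M:ℝ)^(2-κ) := by
        have := sum_pos_pow_le hp (by linarith) (N := M) (by omega)
        rw [show (2-κ) - 1 = 1-κ by ring] at this
        exact this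
      have hMup : (M:ℝ)^(2-κ) ≤ ε^(κ-2) := by
        have h1 : (M:ℝ)^(2-κ) ≤ (1/ε)^(2-κ) :=
          Real.rpow_le_rpow (by positivity) hMle (by linarith)
        have h2 : (1/ε)^(2-κ) = ε^(κ-2) := by
          rw [one_div, Real.inv_rpow (le_of_lt hε0), ← Real.rpow_neg (le_of_lt hε0),
            show -(2-κ) = κ-2 by ring]
        rwa [h2] at h1
      have hpow4 : ε^4 * ε^(κ-2) = ε^(2+κ) := by
        rw [← Real.rpow_natCast ε 4, ← Real.rpow_add hε0]
        congr 1; push_cast; ring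
      calc ε^4 * ∑ m ∈ Finset.Icc (1:ℕ) M, (m:ℝ)^(1-κ)
          ≤ ε^4 * ((1 + 2/(2-κ)) * (M:ℝ)^(2-κ)) :=
            mul_le_mul_of_nonneg_left hsum (by positivity)
        _ ≤ ε^4 * ((1 + 2/(2-κ)) * ε^(κ-2)) := by
            apply mul_le_mul_of_nonneg_left _ (by positivity)
            exact mul_le_mul_of_nonneg_left hMup (by linarith)
        _ = (1 + 2/(2-κ)) * (ε^4 * ε^(κ-2)) := by ring
        _ = (1 + 2/(2-κ)) * ε ^ (2+κ) := by rw [hpow4]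
    rw [hmin]
    calc ∑ m ∈ Finset.Icc (1:ℕ) N, min (ε^2 * (m:ℝ)^(-(1+κ))) (ε^4 * (m:ℝ)^(1-κ))
        ≤ ∑ m ∈ Finset.Icc (1:ℕ) M, ε^4*(m:ℝ)^(1-κ)
          + ∑ m ∈ Finset.Icc (M+1) N, ε^2*(m:ℝ)^(-(1+κ)) := hsplit
      _ ≤ (1 + 2/(2-κ)) * ε ^ (2+κ) + (2^κ/κ) * ε ^ (2+κ) := add_le_add hhead htail
      _ = ((1 + 2/(2-κ)) + 2^κ/κ) * ε ^ (2+κ) := by ring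
  · -- κ > 2
    have hp : (0:ℝ) < κ - 2 := by linarith
    have hC1 : (0:ℝ) < 1/(κ-2) := by positivity
    refine ⟨(1 + 1/(κ-2)) + 2^κ/κ, by linarith, ?_⟩
    intro ε hε0 hε N
    obtain ⟨hM2, hMle, hMge⟩ := Mfacts hε0 hε
    set M := ⌊1/ε⌋₊ with hM
    have hε1 : ε ≤ 1 := by linarith
    have hmin : (2:ℝ) + min κ 2 = ((4:ℕ):ℝ) := by
      rw [min_eq_right (le_of_lt hgt)]; norm_num
    have hrpow4 : ε ^ ((2:ℝ) + min κ 2) = ε^(4:ℕ) := by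
      rw [hmin, Real.rpow_natCast]
    have hsplit := sum_min_split (fun m => ε^2*(m:ℝ)^(-(1+κ))) (fun m => ε^4*(m:ℝ)^(1-κ))
      (fun m => by positivity) (fun m => by positivity) M N
    have htail := tail_bound hκ hε0 hε N
    have htail2 : ∑ m ∈ Finset.Icc (M+1) N, ε^2*(m:ℝ)^(-(1+κ)) ≤ (2^κ/κ) * ε^(4:ℕ) := by
      refine le_trans htail ?_
      apply mul_le_mul_of_nonneg_left _ (le_of_lt h2κ)
      rw [← Real.rpow_natCast ε 4]
      exact Real.rpow_le_rpow_of_exponent_ge hε0 hε1 (by push_cast; linarith)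
    have hhead : ∑ m ∈ Finset.Icc (1:ℕ) M, ε^4 * (m:ℝ)^(1-κ)
        ≤ (1 + 1/(κ-2)) * ε^(4:ℕ) := by
      rw [head_factor]
      have hsum : ∑ m ∈ Finset.Icc (1:ℕ) M, (m:ℝ)^(1-κ) ≤ 1 + 1/(κ-2) := by
        have := sum_neg_pow_le hp (N := M)
        rw [show -(1+(κ-2)) = 1-κ by ring] at this
        exact this
      calc ε^4 * ∑ m ∈ Finset.Icc (1:ℕ) M, (m:ℝ)^(1-κ)
          ≤ ε^4 * (1 + 1/(κ-2)) := mul_le_mul_of_nonneg_left hsum (by positivity)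
        _ = (1 + 1/(κ-2)) * ε^(4:ℕ) := by ring
    calc ∑ m ∈ Finset.Icc (1:ℕ) N, min (ε^2 * (m:ℝ)^(-(1+κ))) (ε^4 * (m:ℝ)^(1-κ))
        ≤ ∑ m ∈ Finset.Icc (1:ℕ) M, ε^4*(m:ℝ)^(1-κ)
          + ∑ m ∈ Finset.Icc (M+1) N, ε^2*(m:ℝ)^(-(1+κ)) := hsplit
      _ ≤ (1 + 1/(κ-2)) * ε^(4:ℕ) + (2^κ/κ) * ε^(4:ℕ) := add_le_add hhead htail2
      _ = ((1 + 1/(κ-2)) + 2^κ/κ) * ε ^ ((2:ℝ) + min κ 2) := by rw [hrpow4]; ring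

/-- Main 1-d estimate, case `κ = 2`. -/
lemma main1d_eq :
    ∃ C : ℝ, 0 < C ∧ ∀ ε : ℝ, 0 < ε → ε ≤ 1/2 → ∀ N : ℕ,
      ∑ m ∈ Finset.Icc (1:ℕ) N, min (ε^2 * (m:ℝ)^(-(1+(2:ℝ)))) (ε^4 * (m:ℝ)^(1-(2:ℝ)))
        ≤ C * ε ^ 4 * Real.log (1/ε) := by
  have hlog2 : (0:ℝ) < Real.log 2 := Real.log_pos one_lt_two
  refine ⟨1 + 3/Real.log 2, by positivity, ?_⟩
  intro ε hε0 hε N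
  obtain ⟨hM2, hMle, hMge⟩ := Mfacts hε0 hε
  set M := ⌊1/ε⌋₊ with hM
  have hL2 : Real.log 2 ≤ Real.log (1/ε) := by
    apply Real.log_le_log (by norm_num)
    rw [le_div_iff₀ hε0]; linarith
  have hLpos : (0:ℝ) < Real.log (1/ε) := lt_of_lt_of_le hlog2 hL2
  have hsplit := sum_min_split (fun m => ε^2*(m:ℝ)^(-(1+(2:ℝ)))) (fun m => ε^4*(m:ℝ)^(1-(2:ℝ)))
    (fun m => by positivity) (fun m => by positivity) M N
  have htail := tail_bound (show (0:ℝ) < 2 by norm_num) hε0 hε N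
  have htail2 : ∑ m ∈ Finset.Icc (M+1) N, ε^2*(m:ℝ)^(-(1+(2:ℝ))) ≤ 2 * ε^(4:ℕ) := by
    refine le_trans htail ?_
    have h1 : (2:ℝ)^(2:ℝ)/2 = 2 := by
      rw [show (2:ℝ) = ((2:ℕ):ℝ) by norm_num, Real.rpow_natCast]; norm_num
    have h2 : ε ^ ((2:ℝ)+2) = ε^(4:ℕ) := by
      rw [show (2:ℝ)+2 = ((4:ℕ):ℝ) by norm_num, Real.rpow_natCast]
    rw [h1, h2]
  have hhead : ∑ m ∈ Finset.Icc (1:ℕ) M, ε^4 * (m:ℝ)^(1-(2:ℝ))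
      ≤ ε^(4:ℕ) * (1 + Real.log (1/ε)) := by
    rw [head_factor]
    have hsum : ∑ m ∈ Finset.Icc (1:ℕ) M, (m:ℝ)^(1-(2:ℝ)) ≤ 1 + Real.log (1/ε) := by
      have h := sum_harmonic_le (N := M) (by omega)
      rw [show (1:ℝ)-(2:ℝ) = -(1:ℝ) by norm_num]
      have hlogM : Real.log M ≤ Real.log (1/ε) := by
        apply Real.log_le_log (by exact_mod_cast (show 0 < M by omega)) hMle
      linarith
    exact mul_le_mul_of_nonneg_left hsum (by positivity)
  calc ∑ m ∈ Finset.Icc (1:ℕ) N, min (ε^2 * (m:ℝ)^(-(1+(2:ℝ)))) (ε^4 * (m:ℝ)^(1-(2:ℝ)))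
      ≤ ∑ m ∈ Finset.Icc (1:ℕ) M, ε^4*(m:ℝ)^(1-(2:ℝ))
        + ∑ m ∈ Finset.Icc (M+1) N, ε^2*(m:ℝ)^(-(1+(2:ℝ))) := hsplit
    _ ≤ ε^(4:ℕ) * (1 + Real.log (1/ε)) + 2 * ε^(4:ℕ) := add_le_add hhead htail2
    _ = ε^(4:ℕ) * (3 + Real.log (1/ε)) := by ring
    _ ≤ ε^(4:ℕ) * ((1 + 3/Real.log 2) * Real.log (1/ε)) := by
        apply mul_le_mul_of_nonneg_left _ (by positivity)
        have h3 : (3:ℝ) = (3/Real.log 2) * Real.log 2 := by field_simp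
        have : (3/Real.log 2) * Real.log 2 ≤ (3/Real.log 2) * Real.log (1/ε) :=
          mul_le_mul_of_nonneg_left hL2 (by positivity)
        nlinarith
    _ = (1 + 3/Real.log 2) * ε ^ 4 * Real.log (1/ε) := by ring

end main1d

/-- The sup norm of a lattice point, as a natural number. -/
def snorm {d : ℕ} (x : Fin d → ℤ) : ℕ := Finset.univ.sup (fun i => (x i).natAbs)

/-- The box `[-N,N]^d` as a finset. -/
noncomputable def box (d N : ℕ) : Finset (Fin d → ℤ) :=
  Fintype.piFinset (fun _ => Finset.Icc (-(N:ℤ)) (N:ℤ))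

lemma mem_box {d N : ℕ} {x : Fin d → ℤ} : x ∈ box d N ↔ snorm x ≤ N := by
  rw [box, Fintype.mem_piFinset, snorm]
  constructor
  · intro h
    apply Finset.sup_le
    intro i _
    have := h i
    simp [Finset.mem_Icc] at this
    omega
  · intro h i
    have h1 : (x i).natAbs ≤ Finset.univ.sup (fun j => (x j).natAbs) :=
      Finset.le_sup (f := fun j => (x j).natAbs) (Finset.mem_univ i)
    simp [Finset.mem_Icc]
    omega

lemma card_box {d N : ℕ} : (box d N).card = (2*N+1)^d := by
  rw [box, Fintype.card_piFinset]
  have : ∀ _i : Fin d, (Finset.Icc (-(N:ℤ)) (N:ℤ)).card = 2*N+1 := by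
    intro i
    rw [Int.card_Icc]
    omega
  calc ∏ i : Fin d, (Finset.Icc (-(N:ℤ)) (N:ℤ)).card = ∏ _i : Fin d, (2*N+1) :=
        Finset.prod_congr rfl (fun i _ => this i)
    _ = (2*N+1)^d := by rw [Finset.prod_const, Finset.card_univ, Fintype.card_fin]

lemma snorm_zero {d : ℕ} : snorm (0 : Fin d → ℤ) = 0 := by
  simp [snorm]

lemma znorm_nonneg {d : ℕ} (x : Fin d → ℤ) : 0 ≤ znorm x := Real.sqrt_nonneg _

lemma znorm_sq {d : ℕ} (x : Fin d → ℤ) : znorm x ^ 2 = ∑ i, ((x i : ℝ)) ^ 2 :=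
  Real.sq_sqrt (Finset.sum_nonneg fun i _ => sq_nonneg _)

lemma abs_coord_le_znorm {d : ℕ} (x : Fin d → ℤ) (i : Fin d) : |(x i : ℝ)| ≤ znorm x := by
  rw [← Real.sqrt_sq_eq_abs]
  apply Real.sqrt_le_sqrt
  exact Finset.single_le_sum (f := fun j => ((x j : ℝ))^2) (fun j _ => sq_nonneg _)
    (Finset.mem_univ i)

lemma snorm_le_znorm {d : ℕ} (hd : 1 ≤ d) (x : Fin d → ℤ) : (snorm x : ℝ) ≤ znorm x := by
  obtain ⟨i, _, hi⟩ := Finset.exists_mem_eq_sup Finset.univ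
    (Finset.univ_nonempty_iff.mpr (by have : NeZero d := ⟨by omega⟩; infer_instance)) 
    (fun i => (x i).natAbs)
  rw [snorm, hi]
  have : ((x i).natAbs : ℝ) = |(x i : ℝ)| := by
    rw [Nat.cast_natAbs]; push_cast; rfl
  rw [this]
  exact abs_coord_le_znorm x i

lemma znorm_sq_le {d : ℕ} (x : Fin d → ℤ) : znorm x ^ 2 ≤ d * (snorm x : ℝ)^2 := by
  rw [znorm_sq]
  have h : ∀ i ∈ Finset.univ, ((x i : ℝ))^2 ≤ ((snorm x : ℝ))^2 := by
    intro i _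
    have h1 : (x i).natAbs ≤ snorm x :=
      Finset.le_sup (f := fun j => (x j).natAbs) (Finset.mem_univ i)
    have h2 : |(x i : ℝ)| ≤ (snorm x : ℝ) := by
      have hc : ((x i).natAbs : ℝ) ≤ (snorm x : ℝ) := by exact_mod_cast h1
      rw [Nat.cast_natAbs] at hc
      exact_mod_cast hc
    calc ((x i : ℝ))^2 = |(x i : ℝ)|^2 := (sq_abs _).symm
      _ ≤ ((snorm x : ℝ))^2 := by
          apply pow_le_pow_left₀ (abs_nonneg _) h2
  calc ∑ i, ((x i : ℝ))^2 ≤ Finset.univ.card • ((snorm x : ℝ))^2 :=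
        Finset.sum_le_card_nsmul _ _ _ h
    _ = d * (snorm x : ℝ)^2 := by
        rw [Finset.card_univ, Fintype.card_fin, nsmul_eq_mul]

/-- `a^d - b^d ≤ d a^(d-1) (a-b)` for `0 ≤ b ≤ a`. -/
lemma pow_sub_pow_le_real {a b : ℝ} (h0 : 0 ≤ b) (hba : b ≤ a) (d : ℕ) :
    a^d - b^d ≤ d * a^(d-1) * (a - b) := by
  rw [← geom_sum₂_mul a b d]
  have hbound : ∑ i ∈ Finset.range d, a ^ i * b ^ (d - 1 - i) ≤ d * a^(d-1) := by
    calc ∑ i ∈ Finset.range d, a ^ i * b ^ (d - 1 - i)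
        ≤ ∑ i ∈ Finset.range d, a^(d-1) := by
          apply Finset.sum_le_sum
          intro i hi
          simp only [Finset.mem_range] at hi
          have ha : 0 ≤ a := le_trans h0 hba
          calc a ^ i * b ^ (d - 1 - i) ≤ a ^ i * a ^ (d - 1 - i) := by
                apply mul_le_mul_of_nonneg_left (pow_le_pow_left₀ h0 hba _) (pow_nonneg ha _)
            _ = a ^ (i + (d - 1 - i)) := (pow_add a i _).symm
            _ ≤ a ^ (d-1) := by
                rcases le_or_gt a 1 with h1 | h1
                · exact pow_le_pow_of_le_one ha h1 (by omega)
                · exact pow_le_pow_right₀ (le_of_lt h1) (by omega)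
      _ = d * a^(d-1) := by rw [Finset.sum_const, Finset.card_range, nsmul_eq_mul]
  have hab : 0 ≤ a - b := by linarith
  exact mul_le_mul_of_nonneg_right hbound hab

/-- Key shell-counting sum bound over boxes. -/
lemma sum_box_le (d : ℕ) (hd : 1 ≤ d) (b : ℕ → ℝ) (hb : ∀ m, 0 ≤ b m)
    (g : (Fin d → ℤ) → ℝ) (hg0 : ∀ x, 0 ≤ g x) (hgb : ∀ x, g x ≤ b (snorm x)) (N : ℕ) :
    ∑ x ∈ box d N, g x
      ≤ b 0 + (2*d*3^(d-1) : ℝ) * ∑ m ∈ Finset.Icc (1:ℕ) N, (m:ℝ)^(d-1) * b m := by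
  induction N with
  | zero =>
    have hbox0 : box d 0 = {0} := by
      ext x
      simp only [mem_box, Finset.mem_singleton, Nat.le_zero]
      constructor
      · intro h
        funext i
        have h1 : (x i).natAbs ≤ snorm x :=
          Finset.le_sup (f := fun j => (x j).natAbs) (Finset.mem_univ i)
        rw [h] at h1
        simp only [Pi.zero_apply]
        omega
      · intro h; subst h; exact snorm_zero
    rw [hbox0, Finset.sum_singleton, Finset.Icc_eq_empty_of_lt (by omega), Finset.sum_empty,
      mul_zero, add_zero]
    have h0 := hgb 0
    rwa [snorm_zero] at h0
  | succ N ih =>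
    have hsub : box d N ⊆ box d (N+1) := by
      intro x hx; rw [mem_box] at *; omega
    have hsplit : ∑ x ∈ box d (N+1), g x
        = ∑ x ∈ box d (N+1) \ box d N, g x + ∑ x ∈ box d N, g x := (Finset.sum_sdiff hsub).symm
    have hshell : ∀ x ∈ box d (N+1) \ box d N, g x ≤ b (N+1) := by
      intro x hx
      rw [Finset.mem_sdiff, mem_box, mem_box] at hx
      have : snorm x = N + 1 := by omega
      rw [← this]; exact hgb x
    have hcard : ((box d (N+1) \ box d N).card : ℝ) ≤ 2*d*3^(d-1) * ((N+1:ℕ):ℝ)^(d-1) := by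
      rw [Finset.card_sdiff_of_subset hsub, card_box, card_box]
      have hle : (2*N+1)^d ≤ (2*(N+1)+1)^d := Nat.pow_le_pow_left (by omega) d
      rw [Nat.cast_sub hle]
      push_cast
      have := pow_sub_pow_le_real (show (0:ℝ) ≤ 2*N+1 by positivity)
        (show (2*N+1:ℝ) ≤ 2*(N+1)+1 by push_cast; linarith) d
      have h3 : ((2*(N+1)+1:ℝ))^(d-1) ≤ (3*(N+1):ℝ)^(d-1) := by
        apply pow_le_pow_left₀ (by positivity) (by push_cast; linarith)
      have h4 : ((3:ℝ)*(N+1))^(d-1) = 3^(d-1) * ((N:ℝ)+1)^(d-1) := by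
        rw [mul_pow]
      calc ((2*(N+1)+1:ℝ))^d - ((2*N+1:ℝ))^d
          ≤ d * ((2*(N+1)+1:ℝ))^(d-1) * (((2*(N+1)+1:ℝ)) - ((2*N+1:ℝ))) := by
            convert this using 2 <;> push_cast <;> ring
        _ = 2*d * ((2*(N+1)+1:ℝ))^(d-1) := by ring
        _ ≤ 2*d * (3^(d-1) * ((N:ℝ)+1)^(d-1)) := by
            apply mul_le_mul_of_nonneg_left _ (by positivity)
            rw [← h4]; exact h3
        _ = 2*d*3^(d-1) * ((N:ℝ)+1)^(d-1) := by ring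
    have hshellsum : ∑ x ∈ box d (N+1) \ box d N, g x
        ≤ 2*d*3^(d-1) * ((N+1:ℕ):ℝ)^(d-1) * b (N+1) := by
      calc ∑ x ∈ box d (N+1) \ box d N, g x
          ≤ (box d (N+1) \ box d N).card • b (N+1) :=
            Finset.sum_le_card_nsmul _ _ _ hshell
        _ = ((box d (N+1) \ box d N).card : ℝ) * b (N+1) := by rw [nsmul_eq_mul]
        _ ≤ 2*d*3^(d-1) * ((N+1:ℕ):ℝ)^(d-1) * b (N+1) :=
            mul_le_mul_of_nonneg_right hcard (hb _)
    rw [hsplit, Finset.sum_Icc_succ_top (by omega)]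
    push_cast at hshellsum ⊢
    linarith

/-- Master tsum bound from shell bounds. -/
lemma tsum_le_of_shell_bound (d : ℕ) (hd : 1 ≤ d) (b : ℕ → ℝ) (hb : ∀ m, 0 ≤ b m)
    (g : (Fin d → ℤ) → ℝ) (hgb : ∀ x, |g x| ≤ b (snorm x)) (B : ℝ)
    (hB : ∀ N : ℕ, ∑ m ∈ Finset.Icc (1:ℕ) N, (m:ℝ)^(d-1) * b m ≤ B) :
    Summable g ∧ ∑' x, |g x| ≤ b 0 + (2*d*3^(d-1) : ℝ) * B := by
  have hC : (0:ℝ) ≤ 2*d*3^(d-1) := by positivity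
  have hbound : ∀ u : Finset (Fin d → ℤ), ∑ x ∈ u, |g x| ≤ b 0 + (2*d*3^(d-1) : ℝ) * B := by
    intro u
    set N := u.sup snorm with hN
    have husub : u ⊆ box d N := by
      intro x hx
      rw [mem_box]
      exact Finset.le_sup hx
    calc ∑ x ∈ u, |g x| ≤ ∑ x ∈ box d N, |g x| :=
          Finset.sum_le_sum_of_subset_of_nonneg husub (fun x _ _ => abs_nonneg _)
      _ ≤ b 0 + (2*d*3^(d-1) : ℝ) * ∑ m ∈ Finset.Icc (1:ℕ) N, (m:ℝ)^(d-1) * b m :=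
          sum_box_le d hd b hb _ (fun x => abs_nonneg _) hgb N
      _ ≤ b 0 + (2*d*3^(d-1) : ℝ) * B := by
          have := hB N
          nlinarith
  have hsumabs : Summable (fun x => |g x|) :=
    summable_of_sum_le (fun x => abs_nonneg _) hbound
  exact ⟨hsumabs.of_abs, Summable.tsum_le_of_sum_le hsumabs hbound⟩

lemma rnorm_nonneg {d : ℕ} (k : Fin d → ℝ) : 0 ≤ rnorm k := Real.sqrt_nonneg _

lemma rnorm_sq {d : ℕ} (k : Fin d → ℝ) : rnorm k ^ 2 = ∑ i, (k i) ^ 2 :=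
  Real.sq_sqrt (Finset.sum_nonneg fun i _ => sq_nonneg _)

/-- Cauchy–Schwarz. -/
lemma inner_le_norms {d : ℕ} (k : Fin d → ℝ) (x : Fin d → ℤ) :
    |∑ i, k i * (x i : ℝ)| ≤ rnorm k * znorm x := by
  have h := Finset.sum_mul_sq_le_sq_mul_sq Finset.univ k (fun i => (x i : ℝ))
  have h2 : (∑ i, k i * (x i : ℝ))^2 ≤ (rnorm k * znorm x)^2 := by
    rw [mul_pow, rnorm_sq, znorm_sq]
    exact h
  have h3 := Real.sqrt_le_sqrt h2
  rwa [Real.sqrt_sq_eq_abs, Real.sqrt_sq (mul_nonneg (rnorm_nonneg k) (znorm_nonneg x))] at h3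

/-- The basic cosine Taylor estimate. -/
lemma cos_est (t : ℝ) : |Real.cos t - 1 + t^2/2| ≤ min (t^2) (t^4) := by
  have h1 : 1 - t^2/2 ≤ Real.cos t := Real.one_sub_sq_div_two_le_cos
  have h2 : Real.cos t ≤ 1 := Real.cos_le_one t
  have hsq : |Real.cos t - 1 + t^2/2| ≤ t^2 := by
    rw [abs_le]; constructor <;> nlinarith [sq_nonneg t]
  apply le_min hsq
  rcases le_or_gt (|t|) 1 with h | h
  · have hb := Real.cos_bound h
    have habs : |t|^4 = t^4 := by rw [← abs_pow]; exact abs_of_nonneg (by positivity)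
    have he : Real.cos t - 1 + t^2/2 = Real.cos t - (1 - t^2/2) := by ring
    rw [he]
    calc |Real.cos t - (1 - t^2/2)| ≤ |t|^4 * (5/96) := hb
      _ = t^4 * (5/96) := by rw [habs]
      _ ≤ t^4 := by nlinarith [pow_nonneg (abs_nonneg t) 4, habs]
  · have ht2 : 1 ≤ t^2 := by nlinarith [abs_nonneg t, sq_abs t]
    have h24 : t^2 ≤ t^4 := by nlinarith
    linarith

/-- Universal summability lemma for decaying functions on `ℤ^d`. -/
lemma summable_decay (d : ℕ) (hd : 1 ≤ d) (s : ℝ) (hs : 0 < s) (C : ℝ) (hC : 0 ≤ C)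
    (g : (Fin d → ℤ) → ℝ) (hg : ∀ x, |g x| ≤ C * (znorm x + 1) ^ (-(d:ℝ)-s)) :
    Summable g ∧ ∑' x, |g x| ≤ C * (1 + (2*d*3^(d-1) : ℝ) * (1+1/s)) := by
  have hds : -(d:ℝ) - s ≤ 0 := by
    have : (0:ℝ) ≤ (d:ℝ) := Nat.cast_nonneg d
    linarith
  set b : ℕ → ℝ := fun m => C * ((m:ℝ)+1) ^ (-(d:ℝ)-s) with hbdef
  have hb : ∀ m, 0 ≤ b m := fun m => by
    apply mul_nonneg hC (Real.rpow_nonneg (by positivity) _)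
  have hgb : ∀ x, |g x| ≤ b (snorm x) := by
    intro x
    refine le_trans (hg x) (mul_le_mul_of_nonneg_left ?_ hC)
    apply Real.rpow_le_rpow_of_nonpos (by positivity) _ hds
    have := snorm_le_znorm hd x
    linarith
  have hB : ∀ N : ℕ, ∑ m ∈ Finset.Icc (1:ℕ) N, (m:ℝ)^(d-1) * b m ≤ C * (1+1/s) := by
    intro N
    have hterm : ∀ m ∈ Finset.Icc (1:ℕ) N, (m:ℝ)^(d-1) * b m ≤ C * (m:ℝ)^(-(1+s)) := by
      intro m hm
      simp only [Finset.mem_Icc] at hm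
      have hm0 : (0:ℝ) < (m:ℝ) := by exact_mod_cast hm.1
      have hdec : ((m:ℝ)+1) ^ (-(d:ℝ)-s) ≤ (m:ℝ) ^ (-(d:ℝ)-s) :=
        Real.rpow_le_rpow_of_nonpos hm0 (by linarith) hds
      have hpowmul : (m:ℝ)^(d-1) * (m:ℝ) ^ (-(d:ℝ)-s) = (m:ℝ)^(-(1+s)) := by
        rw [← Real.rpow_natCast (m:ℝ) (d-1), ← Real.rpow_add hm0]
        congr 1
        have : ((d-1 : ℕ):ℝ) = (d:ℝ) - 1 := by
          have : (1:ℕ) ≤ d := hd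
          push_cast [Nat.cast_sub this]
          ring
        rw [this]; ring
      calc (m:ℝ)^(d-1) * b m = C * ((m:ℝ)^(d-1) * ((m:ℝ)+1) ^ (-(d:ℝ)-s)) := by
            rw [hbdef]; ring
        _ ≤ C * ((m:ℝ)^(d-1) * (m:ℝ) ^ (-(d:ℝ)-s)) := by
            apply mul_le_mul_of_nonneg_left _ hC
            exact mul_le_mul_of_nonneg_left hdec (by positivity)
        _ = C * (m:ℝ)^(-(1+s)) := by rw [hpowmul]
    calc ∑ m ∈ Finset.Icc (1:ℕ) N, (m:ℝ)^(d-1) * b m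
        ≤ ∑ m ∈ Finset.Icc (1:ℕ) N, C * (m:ℝ)^(-(1+s)) := Finset.sum_le_sum hterm
      _ = C * ∑ m ∈ Finset.Icc (1:ℕ) N, (m:ℝ)^(-(1+s)) := by rw [Finset.mul_sum]
      _ ≤ C * (1+1/s) := mul_le_mul_of_nonneg_left (sum_neg_pow_le hs N) hC
  obtain ⟨hsum, hle⟩ := tsum_le_of_shell_bound d hd b hb g hgb (C * (1+1/s)) hB
  refine ⟨hsum, le_trans hle ?_⟩
  have hb0 : b 0 = C := by
    rw [hbdef]; norm_num
  rw [hb0]; ring_nf; nlinarith [hle]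

section symm
variable {d : ℕ} (f : (Fin d → ℤ) → ℝ)

/-- Sign flip of coordinate `i`, as a permutation of `ℤ^d`. -/
def flipPerm (i : Fin d) : Equiv.Perm (Fin d → ℤ) :=
  Function.Involutive.toPerm (fun x => fun j => if j = i then -(x j) else x j)
    (by
      intro x
      funext j
      by_cases h : j = i <;> simp [h])

lemma flipPerm_apply (i : Fin d) (x : Fin d → ℤ) (j : Fin d) :
    flipPerm i x j = if j = i then -(x j) else x j := rfl

lemma flip_invariant (hsymm : ZdSymm f) (i : Fin d) (x : Fin d → ℤ) : f (flipPerm i x) = f x := by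
  have h := hsymm (Equiv.refl _) (fun j => decide (j = i)) x
  simp only [Equiv.refl_apply, decide_eq_true_eq] at h
  convert h using 2
  exact funext fun j => flipPerm_apply i x j

/-- Coordinate permutation as an equiv of `ℤ^d`. -/
def permE (σ : Equiv.Perm (Fin d)) : (Fin d → ℤ) ≃ (Fin d → ℤ) :=
  Equiv.arrowCongr σ.symm (Equiv.refl ℤ)

lemma permE_apply (σ : Equiv.Perm (Fin d)) (x : Fin d → ℤ) (j : Fin d) :
    permE σ x j = x (σ j) := by
  simp [permE, Equiv.arrowCongr_apply]

lemma perm_invariant (hsymm : ZdSymm f) (σ : Equiv.Perm (Fin d)) (x : Fin d → ℤ) :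
    f (permE σ x) = f x := by
  have h := hsymm σ (fun _ => false) x
  simp only [Bool.false_eq_true, if_false] at h
  convert h using 2
  exact funext fun j => permE_apply σ x j

/-- Off-diagonal second moments vanish. -/
lemma offdiag_zero (hsymm : ZdSymm f) (i j : Fin d) (hij : i ≠ j)
    (hsums : Summable (fun x : Fin d → ℤ => f x * (x i : ℝ) * (x j : ℝ))) :
    ∑' x : Fin d → ℤ, f x * (x i : ℝ) * (x j : ℝ) = 0 := by
  set g : (Fin d → ℤ) → ℝ := fun x => f x * (x i : ℝ) * (x j : ℝ) with hg
  have h := Equiv.tsum_eq (flipPerm i) g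
  have hneg : ∀ x, g (flipPerm i x) = -(g x) := by
    intro x
    rw [hg]
    simp only
    rw [flip_invariant f hsymm i x, flipPerm_apply, flipPerm_apply, if_pos rfl,
      if_neg (fun hc => hij hc.symm)]
    push_cast
    ring
  rw [tsum_congr hneg, tsum_neg] at h
  linarith

/-- Diagonal second moments agree. -/
lemma diag_eq (hsymm : ZdSymm f) (i j : Fin d) :
    ∑' x : Fin d → ℤ, f x * (x i : ℝ) * (x i : ℝ)
      = ∑' x : Fin d → ℤ, f x * (x j : ℝ) * (x j : ℝ) := by
  set g : (Fin d → ℤ) → ℝ := fun x => f x * (x i : ℝ) * (x i : ℝ) with hg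
  have h := Equiv.tsum_eq (permE (Equiv.swap i j)) g
  have hc : ∀ x : Fin d → ℤ, g (permE (Equiv.swap i j) x) = f x * (x j : ℝ) * (x j : ℝ) := by
    intro x
    rw [hg]
    simp only
    rw [perm_invariant f hsymm, permE_apply, Equiv.swap_apply_left]
  rw [tsum_congr hc] at h
  exact h.symm

/-- The second-moment identity from symmetry. -/
lemma moment_identity (hd : 1 ≤ d) (hsymm : ZdSymm f) (k : Fin d → ℝ)
    (hij : ∀ i j : Fin d, Summable (fun x : Fin d → ℤ => f x * (x i : ℝ) * (x j : ℝ))) :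
    ∑' x : Fin d → ℤ, f x * (∑ i, k i * (x i : ℝ))^2
      = rnorm k ^ 2 / d * ∑' x : Fin d → ℤ, f x * znorm x ^ 2 := by
  have i0 : Fin d := ⟨0, hd⟩
  set T : Fin d → Fin d → ℝ := fun i j => ∑' x : Fin d → ℤ, f x * (x i : ℝ) * (x j : ℝ)
    with hT
  have hpt : ∀ x : Fin d → ℤ, f x * (∑ i, k i * (x i : ℝ))^2
      = ∑ p : Fin d × Fin d, k p.1 * k p.2 * (f x * (x p.1 : ℝ) * (x p.2 : ℝ)) := by
    intro x
    rw [Fintype.sum_prod_type, sq, Finset.sum_mul_sum, Finset.mul_sum]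
    refine Finset.sum_congr rfl fun i _ => ?_
    rw [Finset.mul_sum]
    exact Finset.sum_congr rfl fun j _ => by ring
  have hstep2 : ∑' x : Fin d → ℤ, f x * (∑ i, k i * (x i : ℝ))^2
      = ∑ p : Fin d × Fin d, k p.1 * k p.2 * T p.1 p.2 := by
    rw [tsum_congr hpt]
    rw [Summable.tsum_finsetSum (f := fun (p : Fin d × Fin d) (x : Fin d → ℤ) =>
      k p.1 * k p.2 * (f x * (x p.1 : ℝ) * (x p.2 : ℝ)))
      (fun p _ => ((hij p.1 p.2).mul_left _))]
    exact Finset.sum_congr rfl fun p _ => tsum_mul_left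
  have hdiagonly : ∀ i : Fin d, ∑ j, k i * k j * T i j = k i * k i * T i i := by
    intro i
    apply Finset.sum_eq_single i
    · intro j _ hji
      have h0 : T i j = 0 := offdiag_zero f hsymm i j (fun h => hji h.symm) (hij i j)
      rw [h0, mul_zero]
    · intro h; exact absurd (Finset.mem_univ i) h
  have hstep4 : ∑ p : Fin d × Fin d, k p.1 * k p.2 * T p.1 p.2
      = (∑ i, k i ^ 2) * T i0 i0 := by
    rw [Fintype.sum_prod_type]
    calc ∑ i, ∑ j, k i * k j * T i j = ∑ i, k i * k i * T i i :=
          Finset.sum_congr rfl fun i _ => hdiagonly i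
      _ = ∑ i, k i ^ 2 * T i0 i0 := Finset.sum_congr rfl fun i _ => by
          have he : T i i = T i0 i0 := diag_eq f hsymm i i0
          rw [he, sq]
      _ = (∑ i, k i ^ 2) * T i0 i0 := by rw [Finset.sum_mul]
  have hstep6 : ∑' x : Fin d → ℤ, f x * znorm x ^ 2 = d * T i0 i0 := by
    have hpt2 : ∀ x : Fin d → ℤ, f x * znorm x ^ 2
        = ∑ i, f x * (x i : ℝ) * (x i : ℝ) := by
      intro x
      rw [znorm_sq, Finset.mul_sum]
      exact Finset.sum_congr rfl fun i _ => by ring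
    rw [tsum_congr hpt2, Summable.tsum_finsetSum (fun i _ => hij i i)]
    calc ∑ i, T i i = ∑ _i : Fin d, T i0 i0 :=
          Finset.sum_congr rfl fun i _ => (diag_eq f hsymm i i0 : T i i = T i0 i0)
      _ = d * T i0 i0 := by
          rw [Finset.sum_const, Finset.card_univ, Fintype.card_fin, nsmul_eq_mul]
  have hd0 : (d:ℝ) ≠ 0 := by have : 0 < d := hd; positivity
  rw [hstep2, hstep4, hstep6, rnorm_sq]
  field_simp

end symm

lemma rpow_merge {m : ℝ} (hm : 0 < m) (a : ℕ) (c : ℝ) :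
    (m:ℝ)^(a:ℕ) * m^(c:ℝ) = m^((a:ℝ)+c) := by
  rw [← Real.rpow_natCast m a, ← Real.rpow_add hm]

lemma snorm_eq_zero {d : ℕ} {x : Fin d → ℤ} (h : snorm x = 0) : x = 0 := by
  funext i
  have h1 : (x i).natAbs ≤ snorm x :=
    Finset.le_sup (f := fun j => (x j).natAbs) (Finset.mem_univ i)
  rw [h] at h1
  simp only [Pi.zero_apply]
  omega

/-- The central estimate. -/
lemma key_estimate (d : ℕ) (hd : 1 ≤ d) (κ : ℝ) (hκ : 0 < κ)
    (f : (Fin d → ℤ) → ℝ) (hsymm : ZdSymm f)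
    (hf : ∀ x, |f x| ≤ (znorm x + 1) ^ (-((d : ℝ) + 2 + κ)))
    (k : Fin d → ℝ) (hk0 : 0 < rnorm k) (hk : rnorm k ≤ 1/2)
    (S : ℝ)
    (hS : ∀ N : ℕ, ∑ m ∈ Finset.Icc (1:ℕ) N,
        min ((rnorm k)^2 * (m:ℝ)^(-(1+κ))) ((rnorm k)^4 * (m:ℝ)^(1-κ)) ≤ S) :
    |fhat f k - (∑' x : Fin d → ℤ, f x) +
        rnorm k ^ 2 / (2 * (d : ℝ)) * ∑' x : Fin d → ℤ, znorm x ^ 2 * f x|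
      ≤ (2*d*3^(d-1) : ℝ) * ((d:ℝ)^2 * S) := by
  set ε := rnorm k with hε
  set t : (Fin d → ℤ) → ℝ := fun x => ∑ i, k i * (x i : ℝ) with ht
  have hε1 : ε ≤ 1 := by linarith
  have hd0 : (0:ℝ) < d := by exact_mod_cast hd
  -- decay bounds
  have hexp : ∀ x : Fin d → ℤ, (znorm x + 1) ^ (-((d : ℝ) + 2 + κ))
      = (znorm x + 1) ^ (-(d:ℝ)-(2+κ)) := by
    intro x; congr 1; ring
  have hfd : ∀ x, |f x| ≤ 1 * (znorm x + 1) ^ (-(d:ℝ)-(2+κ)) := by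
    intro x; rw [one_mul, ← hexp]; exact hf x
  have hzplus : ∀ x : Fin d → ℤ, (0:ℝ) < znorm x + 1 := by
    intro x; have := znorm_nonneg x; linarith
  have hznsq : ∀ x : Fin d → ℤ, znorm x ^ 2 * (znorm x + 1) ^ (-((d:ℝ)+2+κ))
      ≤ (znorm x + 1) ^ (-(d:ℝ)-κ) := by
    intro x
    have h1 : znorm x ^ 2 ≤ (znorm x + 1)^2 := by
      have := znorm_nonneg x; nlinarith
    calc znorm x ^ 2 * (znorm x + 1) ^ (-((d:ℝ)+2+κ))
        ≤ (znorm x + 1)^2 * (znorm x + 1) ^ (-((d:ℝ)+2+κ)) := by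
          apply mul_le_mul_of_nonneg_right h1 (Real.rpow_nonneg (le_of_lt (hzplus x)) _)
      _ = (znorm x + 1) ^ (((2:ℕ):ℝ) + -((d:ℝ)+2+κ)) := by
          rw [← Real.rpow_natCast (znorm x + 1) 2, ← Real.rpow_add (hzplus x)]
      _ = (znorm x + 1) ^ (-(d:ℝ)-κ) := by congr 1; push_cast; ring
  -- summability of the pieces
  have Sf : Summable f :=
    (summable_decay d hd (2+κ) (by linarith) 1 one_pos.le f hfd).1
  have Sfcos : Summable (fun x : Fin d → ℤ => f x * Real.cos (t x)) := by
    apply (summable_decay d hd (2+κ) (by linarith) 1 one_pos.le _ ?_).1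
    intro x
    rw [abs_mul, one_mul]
    calc |f x| * |Real.cos (t x)| ≤ |f x| * 1 :=
          mul_le_mul_of_nonneg_left (Real.abs_cos_le_one _) (abs_nonneg _)
      _ ≤ (znorm x + 1) ^ (-(d:ℝ)-(2+κ)) := by rw [mul_one, ← hexp]; exact hf x
  have Sz2f : Summable (fun x : Fin d → ℤ => znorm x ^ 2 * f x) := by
    apply (summable_decay d hd κ hκ 1 one_pos.le _ ?_).1
    intro x
    rw [abs_mul, one_mul, abs_of_nonneg (sq_nonneg (znorm x) : (0:ℝ) ≤ znorm x ^2)]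
    calc znorm x ^ 2 * |f x| ≤ znorm x ^2 * (znorm x + 1) ^ (-((d:ℝ)+2+κ)) :=
          mul_le_mul_of_nonneg_left (hf x) (sq_nonneg _)
      _ ≤ (znorm x + 1) ^ (-(d:ℝ)-κ) := hznsq x
  have Sij : ∀ i j : Fin d, Summable (fun x : Fin d → ℤ => f x * (x i : ℝ) * (x j : ℝ)) := by
    intro i j
    apply (summable_decay d hd κ hκ 1 one_pos.le _ ?_).1
    intro x
    rw [abs_mul, abs_mul, one_mul]
    calc |f x| * |(x i : ℝ)| * |(x j : ℝ)|
        ≤ |f x| * znorm x * znorm x := by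
          apply mul_le_mul (mul_le_mul_of_nonneg_left (abs_coord_le_znorm x i) (abs_nonneg _))
            (abs_coord_le_znorm x j) (abs_nonneg _)
          exact mul_nonneg (abs_nonneg _) (znorm_nonneg x)
      _ = znorm x ^ 2 * |f x| := by ring
      _ ≤ znorm x ^2 * (znorm x + 1) ^ (-((d:ℝ)+2+κ)) :=
          mul_le_mul_of_nonneg_left (hf x) (sq_nonneg _)
      _ ≤ (znorm x + 1) ^ (-(d:ℝ)-κ) := hznsq x
  have St2 : Summable (fun x : Fin d → ℤ => f x * (t x)^2) := by
    apply (summable_decay d hd κ hκ 1 one_pos.le _ ?_).1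
    intro x
    rw [abs_mul, one_mul, abs_of_nonneg (sq_nonneg (t x))]
    have htle : (t x)^2 ≤ znorm x ^2 := by
      have h1 := inner_le_norms k x
      have h2 : |t x| ≤ znorm x := by
        have : ε * znorm x ≤ 1 * znorm x :=
          mul_le_mul_of_nonneg_right hε1 (znorm_nonneg x)
        rw [one_mul] at this
        exact le_trans h1 this
      calc (t x)^2 = |t x|^2 := (sq_abs _).symm
        _ ≤ znorm x ^2 := by
            apply pow_le_pow_left₀ (abs_nonneg _) h2
    calc |f x| * (t x)^2 ≤ |f x| * znorm x ^2 :=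
          mul_le_mul_of_nonneg_left htle (abs_nonneg _)
      _ = znorm x ^2 * |f x| := by ring
      _ ≤ znorm x ^2 * (znorm x + 1) ^ (-((d:ℝ)+2+κ)) :=
          mul_le_mul_of_nonneg_left (hf x) (sq_nonneg _)
      _ ≤ (znorm x + 1) ^ (-(d:ℝ)-κ) := hznsq x
  -- rewrite the error term as a single tsum
  have hmom := moment_identity f hd hsymm k Sij
  have hswap : ∑' x : Fin d → ℤ, znorm x ^ 2 * f x = ∑' x : Fin d → ℤ, f x * znorm x ^2 :=
    tsum_congr (fun x => mul_comm _ _)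
  set g : (Fin d → ℤ) → ℝ := fun x => f x * (Real.cos (t x) - 1 + (t x)^2/2) with hg
  have hE : fhat f k - (∑' x : Fin d → ℤ, f x) +
      rnorm k ^ 2 / (2 * (d : ℝ)) * ∑' x : Fin d → ℤ, znorm x ^ 2 * f x
      = ∑' x, g x := by
    have hgsplit : ∀ x, g x = (f x * Real.cos (t x) - f x) + f x * (t x)^2/2 := by
      intro x; rw [hg]; ring
    rw [tsum_congr hgsplit,
      Summable.tsum_add (Sfcos.sub Sf) (St2.div_const 2),
      Summable.tsum_sub Sfcos Sf, tsum_div_const]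
    rw [hmom] at *
    rw [fhat, hswap, hmom]
    field_simp
    ring
  rw [hE]
  -- now the quantitative bound
  set b : ℕ → ℝ := fun m => (d:ℝ)^2 *
    min (ε^2 * (m:ℝ)^(2-((d:ℝ)+2+κ))) (ε^4 * (m:ℝ)^(4-((d:ℝ)+2+κ))) with hb
  have hbnonneg : ∀ m, 0 ≤ b m := by
    intro m
    apply mul_nonneg (by positivity)
    apply le_min <;> positivity
  have hgb : ∀ x, |g x| ≤ b (snorm x) := by
    intro x
    have hgabs : |g x| ≤ |f x| * min ((t x)^2) ((t x)^4) := by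
      rw [hg]
      simp only
      rw [abs_mul]
      exact mul_le_mul_of_nonneg_left (cos_est (t x)) (abs_nonneg _)
    rcases Nat.eq_zero_or_pos (snorm x) with h0 | hpos
    · have hx0 : x = 0 := snorm_eq_zero h0
      have ht0 : t x = 0 := by
        rw [hx0, ht]; simp
      have : |g x| ≤ 0 := by
        refine le_trans hgabs ?_
        rw [ht0]; norm_num
      exact le_trans this (by rw [h0]; exact hbnonneg 0)
    · set m := snorm x with hm
      have hm0 : (0:ℝ) < (m:ℝ) := by exact_mod_cast hpos
      have hm1 : (1:ℝ) ≤ (m:ℝ) := by exact_mod_cast hpos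
      -- |f x| ≤ m^{-(d+2+κ)}
      have hfm : |f x| ≤ (m:ℝ) ^ (-((d:ℝ)+2+κ)) := by
        refine le_trans (hf x) ?_
        apply Real.rpow_le_rpow_of_nonpos hm0 _ (by linarith)
        have := snorm_le_znorm hd x
        rw [← hm] at this
        linarith
      -- t² ≤ ε² d m², t⁴ ≤ ε⁴ d² m⁴
      have htsq : (t x)^2 ≤ ε^2 * ((d:ℝ) * (m:ℝ)^2) := by
        have h1 := inner_le_norms k x
        have h2 : (t x)^2 ≤ (ε * znorm x)^2 := by
          calc (t x)^2 = |t x|^2 := (sq_abs _).symm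
            _ ≤ (ε * znorm x)^2 :=
                pow_le_pow_left₀ (abs_nonneg _) h1 2
        have h3 : znorm x ^2 ≤ (d:ℝ) * (m:ℝ)^2 := by
          have := znorm_sq_le x; rw [← hm] at this; exact this
        calc (t x)^2 ≤ (ε * znorm x)^2 := h2
          _ = ε^2 * znorm x^2 := by ring
          _ ≤ ε^2 * ((d:ℝ) * (m:ℝ)^2) := by
              apply mul_le_mul_of_nonneg_left h3 (by positivity)
      have ht4 : (t x)^4 ≤ ε^4 * ((d:ℝ)^2 * (m:ℝ)^4) := by
        have h4 : (t x)^4 = ((t x)^2)^2 := by ring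
        rw [h4]
        calc ((t x)^2)^2 ≤ (ε^2 * ((d:ℝ) * (m:ℝ)^2))^2 :=
              pow_le_pow_left₀ (sq_nonneg _) htsq 2
          _ = ε^4 * ((d:ℝ)^2 * (m:ℝ)^4) := by ring
      -- assemble via le_min
      have hw : (0:ℝ) ≤ (m:ℝ) ^ (-((d:ℝ)+2+κ)) := Real.rpow_nonneg (le_of_lt hm0) _
      have hchain : |f x| * min ((t x)^2) ((t x)^4) ≤ b m := by
        rw [hb]
        simp only
        rw [mul_min_of_nonneg _ _ (show (0:ℝ) ≤ (d:ℝ)^2 by positivity)]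
        apply le_min
        · -- first component
          calc |f x| * min ((t x)^2) ((t x)^4)
              ≤ (m:ℝ)^(-((d:ℝ)+2+κ)) * (t x)^2 := by
                apply mul_le_mul hfm (min_le_left _ _)
                  (le_min (sq_nonneg _) (by positivity)) hw
            _ ≤ (m:ℝ)^(-((d:ℝ)+2+κ)) * (ε^2 * ((d:ℝ) * (m:ℝ)^2)) :=
                mul_le_mul_of_nonneg_left htsq hw
            _ = (d:ℝ) * (ε^2 * ((m:ℝ)^(2:ℕ) * (m:ℝ)^(-((d:ℝ)+2+κ)))) := by ring
            _ = (d:ℝ) * (ε^2 * (m:ℝ)^(2-((d:ℝ)+2+κ))) := by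
                rw [rpow_merge hm0 2,
                  show ((2:ℕ):ℝ) + -((d:ℝ)+2+κ) = 2-((d:ℝ)+2+κ) by push_cast; ring]
            _ ≤ (d:ℝ)^2 * (ε^2 * (m:ℝ)^(2-((d:ℝ)+2+κ))) := by
                apply mul_le_mul_of_nonneg_right _ (by positivity)
                have hd1 : (1:ℝ) ≤ (d:ℝ) := by exact_mod_cast hd
                nlinarith [hd1]
        · calc |f x| * min ((t x)^2) ((t x)^4)
              ≤ (m:ℝ)^(-((d:ℝ)+2+κ)) * (t x)^4 := by
                apply mul_le_mul hfm (min_le_right _ _)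
                  (le_min (sq_nonneg _) (by positivity)) hw
            _ ≤ (m:ℝ)^(-((d:ℝ)+2+κ)) * (ε^4 * ((d:ℝ)^2 * (m:ℝ)^4)) :=
                mul_le_mul_of_nonneg_left ht4 hw
            _ = (d:ℝ)^2 * (ε^4 * ((m:ℝ)^(4:ℕ) * (m:ℝ)^(-((d:ℝ)+2+κ)))) := by ring
            _ = (d:ℝ)^2 * (ε^4 * (m:ℝ)^(4-((d:ℝ)+2+κ))) := by
                rw [rpow_merge hm0 4,
                  show ((4:ℕ):ℝ) + -((d:ℝ)+2+κ) = 4-((d:ℝ)+2+κ) by push_cast; ring]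
      calc |g x| ≤ |f x| * min ((t x)^2) ((t x)^4) := hgabs
        _ ≤ b m := hchain
  have hB : ∀ N : ℕ, ∑ m ∈ Finset.Icc (1:ℕ) N, (m:ℝ)^(d-1) * b m ≤ (d:ℝ)^2 * S := by
    intro N
    have hterm : ∀ m ∈ Finset.Icc (1:ℕ) N, (m:ℝ)^(d-1) * b m
        ≤ (d:ℝ)^2 * min (ε^2 * (m:ℝ)^(-(1+κ))) (ε^4 * (m:ℝ)^(1-κ)) := by
      intro m hmm
      simp only [Finset.mem_Icc] at hmm
      have hm0 : (0:ℝ) < (m:ℝ) := by exact_mod_cast hmm.1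
      have hcast : ((d-1:ℕ):ℝ) = (d:ℝ) - 1 := by
        push_cast [Nat.cast_sub hd]; ring
      have hmerge1 : (m:ℝ)^(d-1:ℕ) * (m:ℝ)^(2-((d:ℝ)+2+κ)) = (m:ℝ)^(-(1+κ)) := by
        rw [rpow_merge hm0 (d-1), hcast]
        congr 1; ring
      have hmerge2 : (m:ℝ)^(d-1:ℕ) * (m:ℝ)^(4-((d:ℝ)+2+κ)) = (m:ℝ)^(1-κ) := by
        rw [rpow_merge hm0 (d-1), hcast]
        congr 1; ring
      have hpw : (0:ℝ) ≤ (m:ℝ)^(d-1:ℕ) := by positivity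
      rw [hb]
      simp only
      rw [show (m:ℝ)^(d-1:ℕ) * ((d:ℝ)^2 *
        min (ε^2 * (m:ℝ)^(2-((d:ℝ)+2+κ))) (ε^4 * (m:ℝ)^(4-((d:ℝ)+2+κ))))
        = (d:ℝ)^2 * ((m:ℝ)^(d-1:ℕ) *
        min (ε^2 * (m:ℝ)^(2-((d:ℝ)+2+κ))) (ε^4 * (m:ℝ)^(4-((d:ℝ)+2+κ)))) from by ring]
      apply mul_le_mul_of_nonneg_left _ (by positivity)
      apply le_min
      · calc (m:ℝ)^(d-1:ℕ) * min (ε^2 * (m:ℝ)^(2-((d:ℝ)+2+κ))) (ε^4 * (m:ℝ)^(4-((d:ℝ)+2+κ)))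
            ≤ (m:ℝ)^(d-1:ℕ) * (ε^2 * (m:ℝ)^(2-((d:ℝ)+2+κ))) :=
              mul_le_mul_of_nonneg_left (min_le_left _ _) hpw
          _ = ε^2 * (m:ℝ)^(-(1+κ)) := by rw [← hmerge1]; ring
      · calc (m:ℝ)^(d-1:ℕ) * min (ε^2 * (m:ℝ)^(2-((d:ℝ)+2+κ))) (ε^4 * (m:ℝ)^(4-((d:ℝ)+2+κ)))
            ≤ (m:ℝ)^(d-1:ℕ) * (ε^4 * (m:ℝ)^(4-((d:ℝ)+2+κ))) :=
              mul_le_mul_of_nonneg_left (min_le_right _ _) hpw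
          _ = ε^4 * (m:ℝ)^(1-κ) := by rw [← hmerge2]; ring
    calc ∑ m ∈ Finset.Icc (1:ℕ) N, (m:ℝ)^(d-1) * b m
        ≤ ∑ m ∈ Finset.Icc (1:ℕ) N,
            (d:ℝ)^2 * min (ε^2 * (m:ℝ)^(-(1+κ))) (ε^4 * (m:ℝ)^(1-κ)) :=
          Finset.sum_le_sum hterm
      _ = (d:ℝ)^2 * ∑ m ∈ Finset.Icc (1:ℕ) N,
            min (ε^2 * (m:ℝ)^(-(1+κ))) (ε^4 * (m:ℝ)^(1-κ)) := by rw [Finset.mul_sum]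
      _ ≤ (d:ℝ)^2 * S := mul_le_mul_of_nonneg_left (hS N) (by positivity)
  obtain ⟨hgsum, hgle⟩ := tsum_le_of_shell_bound d hd b hbnonneg g hgb ((d:ℝ)^2 * S) hB
  have hb0 : b 0 = 0 := by
    rw [hb]
    simp only [Nat.cast_zero]
    rw [Real.zero_rpow (show 2-((d:ℝ)+2+κ) ≠ 0 by
      intro h
      have hd1 : (1:ℝ) ≤ (d:ℝ) := by exact_mod_cast hd
      linarith), mul_zero]
    rw [min_eq_left (by positivity)]
    ring
  rw [hb0, zero_add] at hgle
  calc |∑' x, g x| ≤ ∑' x, |g x| := by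
        have h1 : Summable (fun x : Fin d → ℤ => |g x|) := hgsum.abs
        have := norm_tsum_le_tsum_norm (f := g) (by simpa [Real.norm_eq_abs] using h1)
        simpa [Real.norm_eq_abs] using this
    _ ≤ (2*d*3^(d-1) : ℝ) * ((d:ℝ)^2 * S) := hgle

theorem stmt4 (d : ℕ) (hd : 1 ≤ d) (κ : ℝ) (hκ : 0 < κ) :
    ∃ c : ℝ, 0 < c ∧ ∀ f : (Fin d → ℤ) → ℝ, ZdSymm f →
      (∀ x, |f x| ≤ (znorm x + 1) ^ (-((d : ℝ) + 2 + κ))) →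
      ∀ k : Fin d → ℝ, 0 < rnorm k → rnorm k ≤ 1 / 2 →
        (κ ≠ 2 →
          |fhat f k - (∑' x : Fin d → ℤ, f x) +
              rnorm k ^ 2 / (2 * (d : ℝ)) * ∑' x : Fin d → ℤ, znorm x ^ 2 * f x| ≤
            c * rnorm k ^ (2 + min κ 2)) ∧
        (κ = 2 →
          |fhat f k - (∑' x : Fin d → ℤ, f x) +
              rnorm k ^ 2 / (2 * (d : ℝ)) * ∑' x : Fin d → ℤ, znorm x ^ 2 * f x| ≤
            c * rnorm k ^ 4 * Real.log (1 / rnorm k)) := by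
  rcases eq_or_ne κ 2 with heq | hne
  · -- κ = 2
    subst heq
    obtain ⟨C₁, hC₁, hbound⟩ := main1d_eq
    have hd0 : (0:ℝ) < (d:ℝ) := by exact_mod_cast hd
    have hcpos : 0 < (2*(d:ℝ)*3^(d-1)) * ((d:ℝ)^2 * C₁) := by
      apply mul_pos
      · exact mul_pos (mul_pos two_pos hd0) (pow_pos (by norm_num : (0:ℝ) < 3) _)
      · exact mul_pos (pow_pos hd0 2) hC₁
    refine ⟨(2*(d:ℝ)*3^(d-1)) * ((d:ℝ)^2 * C₁), hcpos, ?_⟩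
    intro f hsymm hf k hk0 hk12
    refine ⟨fun h => absurd rfl h, fun _ => ?_⟩
    have hkey := key_estimate d hd 2 hκ f hsymm hf k hk0 hk12
      (C₁ * rnorm k ^ 4 * Real.log (1 / rnorm k))
      (hbound (rnorm k) hk0 hk12)
    calc |fhat f k - (∑' x : Fin d → ℤ, f x) +
          rnorm k ^ 2 / (2 * (d : ℝ)) * ∑' x : Fin d → ℤ, znorm x ^ 2 * f x|
        ≤ (2*d*3^(d-1) : ℝ) * ((d:ℝ)^2 * (C₁ * rnorm k ^ 4 * Real.log (1 / rnorm k))) := hkey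
      _ = (2*(d:ℝ)*3^(d-1)) * ((d:ℝ)^2 * C₁) * rnorm k ^ 4 * Real.log (1 / rnorm k) := by
          ring
  · -- κ ≠ 2
    obtain ⟨C₁, hC₁, hbound⟩ := main1d_ne hκ hne
    have hd0 : (0:ℝ) < (d:ℝ) := by exact_mod_cast hd
    have hcpos : 0 < (2*(d:ℝ)*3^(d-1)) * ((d:ℝ)^2 * C₁) := by
      apply mul_pos
      · exact mul_pos (mul_pos two_pos hd0) (pow_pos (by norm_num : (0:ℝ) < 3) _)
      · exact mul_pos (pow_pos hd0 2) hC₁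
    refine ⟨(2*(d:ℝ)*3^(d-1)) * ((d:ℝ)^2 * C₁), hcpos, ?_⟩
    intro f hsymm hf k hk0 hk12
    refine ⟨fun _ => ?_, fun h => absurd h hne⟩
    have hkey := key_estimate d hd κ hκ f hsymm hf k hk0 hk12
      (C₁ * rnorm k ^ (2 + min κ 2))
      (hbound (rnorm k) hk0 hk12)
    calc |fhat f k - (∑' x : Fin d → ℤ, f x) +
          rnorm k ^ 2 / (2 * (d : ℝ)) * ∑' x : Fin d → ℤ, znorm x ^ 2 * f x|
        ≤ (2*d*3^(d-1) : ℝ) * ((d:ℝ)^2 * (C₁ * rnorm k ^ (2 + min κ 2))) := hkey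
      _ = (2*(d:ℝ)*3^(d-1)) * ((d:ℝ)^2 * C₁) * rnorm k ^ (2 + min κ 2) := by ring
end

section
/- Let a, T be real numbers with a ≥ T > 0 and let b > 1. If 1 < b ≤ 2, then ∫₀^T t^{−b} e^{−a/t} dt ≤ a^{−1} T^{2−b} e^{−a/T}. If b > 2, then there exists a constant C(b), depending only on b, such that ∫₀^T t^{−b} e^{−a/t} dt ≤ C(b) a^{1−b} e^{−a/(2T)}. -/
/-! For `b ≤ 2` one bounds `t ^ (-b) ≤ T ^ (2 - b) * t⁻²` on `(0, T]`; and `(a / t²) e^{-a/t}` is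
the derivative of `e^{-a/t}`, which extends continuously by `0` to `t = 0` as
`expNegInvGlue (t / a)`, so its integral over `(0, T]` is exactly `e^{-a/T}`.

For `b > 0`, put `y = a / (2t)`: the integrand is `(2/a)^b · y^b e^{-y} · e^{-y}`. Since
`y^b e^{-y}` is maximal at `y = b`, the middle factor is at most `(b/e)^b`, and `e^{-y} ≤ e^{-a/(2T)}`.
Integrating this constant over an interval of length `T ≤ a` gives the bound with
`C(b) = (2b/e)^b`. -/

open MeasureTheory Real Set

lemma rpow_mul_exp_neg_le {c x : ℝ} (hc : 0 < c) (hx : 0 < x) :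
    x ^ c * exp (-x) ≤ (c / exp 1) ^ c := by
  have hlog : c * log (x / c) ≤ c * (x / c - 1) :=
    mul_le_mul_of_nonneg_left (log_le_sub_one_of_pos (by positivity)) hc.le
  rw [log_div hx.ne' hc.ne'] at hlog
  rw [rpow_def_of_pos hx, rpow_def_of_pos (by positivity), log_div hc.ne' (exp_pos 1).ne', log_exp,
    ← exp_add]
  gcongr
  field_simp at hlog
  nlinarith

lemma rpow_neg_mul_exp_neg_div_le {a b t T : ℝ} (ha : 0 < a) (hb : 0 < b) (ht : 0 < t)
    (htT : t ≤ T) :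
    t ^ (-b) * exp (-a / t) ≤ (2 * b / exp 1) ^ b * a ^ (-b) * exp (-a / (2 * T)) := by
  set y := a / (2 * t)
  have hy : 0 < y := by positivity
  have ht_eq : t = a / (2 * y) := by simp only [y]; field_simp
  have hsplit : exp (-a / t) = exp (-y) * exp (-y) := by
    rw [← exp_add, ht_eq]; congr 1; field_simp; ring
  have hpow : t ^ (-b) = 2 ^ b * a ^ (-b) * y ^ b := by
    rw [rpow_neg ht.le, ← inv_rpow ht.le, ht_eq, inv_div, div_rpow (by positivity) ha.le,
      mul_rpow zero_le_two hy.le, rpow_neg ha.le]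
    ring
  have hdecay : exp (-y) ≤ exp (-a / (2 * T)) := by
    rw [exp_le_exp, neg_div]; simp only [y]; gcongr
  calc t ^ (-b) * exp (-a / t) = 2 ^ b * a ^ (-b) * (y ^ b * exp (-y)) * exp (-y) := by
        rw [hsplit, hpow]; ring
    _ ≤ 2 ^ b * a ^ (-b) * (b / exp 1) ^ b * exp (-a / (2 * T)) := by
        gcongr
        exact rpow_mul_exp_neg_le hb hy
    _ = (2 * b / exp 1) ^ b * a ^ (-b) * exp (-a / (2 * T)) := by
        rw [mul_div_assoc, mul_rpow zero_le_two (by positivity)]; ring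

lemma hasDerivAt_expNegInvGlue_div {a x : ℝ} (ha : 0 < a) (hx : 0 < x) :
    HasDerivAt (fun t ↦ expNegInvGlue (t / a)) (a / x ^ 2 * exp (-a / x)) x := by
  have hexp : HasDerivAt (fun t ↦ exp (-a / t)) (a / x ^ 2 * exp (-a / x)) x := by
    convert ((hasDerivAt_inv hx.ne').const_mul (-a)).exp using 1
    · ext t; rw [div_eq_mul_inv]
    · rw [div_eq_mul_inv (-a)]; ring
  refine hexp.congr_of_eventuallyEq ?_
  filter_upwards [Ioi_mem_nhds hx] with t ht
  rw [expNegInvGlue, if_neg (not_le.2 (div_pos ht ha)), inv_div, neg_div]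

lemma continuous_expNegInvGlue_div (a : ℝ) : Continuous fun t ↦ expNegInvGlue (t / a) :=
  (expNegInvGlue.contDiff (n := 0)).continuous.comp (continuous_id.div_const a)

lemma integrableOn_div_sq_mul_exp_neg_div {a : ℝ} (ha : 0 < a) (T : ℝ) :
    IntegrableOn (fun t ↦ a / t ^ 2 * exp (-a / t)) (Ioc 0 T) :=
  intervalIntegral.integrableOn_deriv_of_nonneg (continuous_expNegInvGlue_div a).continuousOn
    (fun _ hx ↦ hasDerivAt_expNegInvGlue_div ha hx.1) (fun _ _ ↦ by positivity)

lemma setIntegral_div_sq_mul_exp_neg_div {a T : ℝ} (ha : 0 < a) (hT : 0 < T) :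
    ∫ t in Ioc 0 T, a / t ^ 2 * exp (-a / t) = exp (-a / T) := by
  rw [← intervalIntegral.integral_of_le hT.le,
    intervalIntegral.integral_eq_sub_of_hasDerivAt_of_le hT.le
      (continuous_expNegInvGlue_div a).continuousOn
      (fun _ hx ↦ hasDerivAt_expNegInvGlue_div ha hx.1)
      ((intervalIntegrable_iff_integrableOn_Ioc_of_le hT.le).2
        (integrableOn_div_sq_mul_exp_neg_div ha T)),
    zero_div, expNegInvGlue.zero, sub_zero, expNegInvGlue, if_neg (not_le.2 (div_pos hT ha)),
    inv_div, neg_div]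

lemma setIntegral_rpow_neg_mul_exp_neg_div_le_of_le_two {a b T : ℝ} (hb : b ≤ 2) (ha : 0 < a)
    (hT : 0 < T) :
    ∫ t in Ioc 0 T, t ^ (-b) * exp (-a / t) ≤ a⁻¹ * T ^ (2 - b) * exp (-a / T) := by
  have hpointwise : ∀ t ∈ Ioc 0 T,
      t ^ (-b) * exp (-a / t) ≤ a⁻¹ * T ^ (2 - b) * (a / t ^ 2 * exp (-a / t)) := by
    rintro t ⟨ht, htT⟩
    have hpow : t ^ (-b) = t ^ (2 - b) / t ^ 2 := by
      rw [rpow_sub ht, rpow_two, rpow_neg ht.le]; field_simp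
    calc t ^ (-b) * exp (-a / t) = t ^ (2 - b) * (exp (-a / t) / t ^ 2) := by
          rw [hpow]; ring
      _ ≤ T ^ (2 - b) * (exp (-a / t) / t ^ 2) := by
          gcongr
      _ = a⁻¹ * T ^ (2 - b) * (a / t ^ 2 * exp (-a / t)) := by
          field_simp
  calc ∫ t in Ioc 0 T, t ^ (-b) * exp (-a / t)
      ≤ ∫ t in Ioc 0 T, a⁻¹ * T ^ (2 - b) * (a / t ^ 2 * exp (-a / t)) :=
        setIntegral_mono_of_nonneg (fun t ht ↦ by have := ht.1; positivity) hpointwise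
          ((integrableOn_div_sq_mul_exp_neg_div ha T).const_mul _)
    _ = a⁻¹ * T ^ (2 - b) * exp (-a / T) := by
        rw [integral_const_mul, setIntegral_div_sq_mul_exp_neg_div ha hT]

lemma setIntegral_rpow_neg_mul_exp_neg_div_le {a b T : ℝ} (hb : 0 < b) (hT : 0 < T)
    (hTa : T ≤ a) :
    ∫ t in Ioc 0 T, t ^ (-b) * exp (-a / t) ≤
      (2 * b / exp 1) ^ b * a ^ (1 - b) * exp (-a / (2 * T)) := by
  have ha : 0 < a := hT.trans_le hTa
  set K := (2 * b / exp 1) ^ b * a ^ (-b) * exp (-a / (2 * T))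
  calc ∫ t in Ioc 0 T, t ^ (-b) * exp (-a / t)
      ≤ ∫ _ in Ioc 0 T, K :=
        setIntegral_mono_of_nonneg (fun t ht ↦ by have := ht.1; positivity)
          (fun t ht ↦ rpow_neg_mul_exp_neg_div_le ha hb ht.1 ht.2)
          (integrableOn_const measure_Ioc_lt_top.ne)
    _ = T * K := by simp [hT.le]
    _ ≤ a * K := by gcongr
    _ = (2 * b / exp 1) ^ b * a ^ (1 - b) * exp (-a / (2 * T)) := by
        simp only [K]; rw [rpow_sub ha, rpow_one, rpow_neg ha.le]; ring

theorem stmt16_general (b : ℝ) :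
    (b ≤ 2 → ∀ a T : ℝ, 0 < T → T ≤ a →
      (∫ t in Set.Ioc (0 : ℝ) T, t ^ (-b) * Real.exp (-a / t)) ≤
        a⁻¹ * T ^ (2 - b) * Real.exp (-a / T)) ∧
    (2 < b → ∃ C : ℝ, 0 < C ∧ ∀ a T : ℝ, 0 < T → T ≤ a →
      (∫ t in Set.Ioc (0 : ℝ) T, t ^ (-b) * Real.exp (-a / t)) ≤
        C * a ^ (1 - b) * Real.exp (-a / (2 * T))) := by
  refine ⟨fun hb a T hT hTa ↦
    setIntegral_rpow_neg_mul_exp_neg_div_le_of_le_two hb (hT.trans_le hTa) hT, fun hb ↦ ?_⟩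
  have hb0 : 0 < b := by linarith
  exact ⟨(2 * b / exp 1) ^ b, by positivity,
    fun a T hT hTa ↦ setIntegral_rpow_neg_mul_exp_neg_div_le hb0 hT hTa⟩

theorem stmt16 (b : ℝ) (hb : 1 < b) :
    (b ≤ 2 → ∀ a T : ℝ, 0 < T → T ≤ a →
      (∫ t in Set.Ioc (0 : ℝ) T, t ^ (-b) * Real.exp (-a / t)) ≤
        a⁻¹ * T ^ (2 - b) * Real.exp (-a / T)) ∧
    (2 < b → ∃ C : ℝ, 0 < C ∧ ∀ a T : ℝ, 0 < T → T ≤ a →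
      (∫ t in Set.Ioc (0 : ℝ) T, t ^ (-b) * Real.exp (-a / t)) ≤
        C * a ^ (1 - b) * Real.exp (-a / (2 * T))) :=
  stmt16_general b
end
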